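/- If the matrix ρ_{AB}^{T_A} is positive semidefinite (ρ_{AB} is PPT), then its moments satisfy p₃ ≥ p₂², where p_n = tr((ρ_{AB}^{T_A})ⁿ); equivalently, a violation p₃ < p₂² certifies that ρ_{AB}^{T_A} has a negative eigenvalue and hence ρ_{AB} is entangled. -/
import Mathlib

open Matrix
open scoped ComplexOrder

noncomputable section

/-- Partial transpose on the `A` factor of a bipartite matrix. -/
def ptA {a b : ℕ} (ρ : Matrix (Fin a × Fin b) (Fin a × Fin b) ℂ) :
    Matrix (Fin a × Fin b) (Fin a × Fin b) ℂ :=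
  fun p q => ρ (q.1, p.2) (p.1, q.2)

lemma trace_ptA {a b : ℕ} (ρ : Matrix (Fin a × Fin b) (Fin a × Fin b) ℂ) :
    (ptA ρ).trace = ρ.trace := by
  simp [Matrix.trace, Matrix.diag, ptA]

lemma trace_pow_eq_sum {n : Type*} [Fintype n] [DecidableEq n]
    {M : Matrix n n ℂ} (hM : M.IsHermitian) (k : ℕ) :
    (M ^ k).trace = ∑ i, ((hM.eigenvalues i : ℂ)) ^ k := by
  set U : Matrix n n ℂ := (hM.eigenvectorUnitary : Matrix n n ℂ) with hUdef
  set D : Matrix n n ℂ := Matrix.diagonal (RCLike.ofReal ∘ hM.eigenvalues) with hDdef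
  have hU : star U * U = 1 := (Matrix.mem_unitaryGroup_iff').mp (hM.eigenvectorUnitary).2
  have hU' : U * star U = 1 := (Matrix.mem_unitaryGroup_iff).mp (hM.eigenvectorUnitary).2
  have hspec : M = U * D * star U := hM.spectral_theorem
  have hpow : M ^ k = U * D ^ k * star U := by
    induction k with
    | zero => simpa using hU'.symm
    | succ k ih =>
      rw [pow_succ, ih, hspec, pow_succ]
      simp only [Matrix.mul_assoc]
      congr 2
      rw [← Matrix.mul_assoc (star U), hU, Matrix.one_mul]
  rw [hpow, Matrix.trace_mul_cycle, hU, Matrix.one_mul, hDdef, Matrix.diagonal_pow,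
    Matrix.trace_diagonal]
  simp

/-- PPT moment inequality: if `ρ_{AB}` is a density matrix whose partial
transpose is positive semidefinite (PPT), then the partial-transpose moments
`p_n = tr((ρ^{T_A})ⁿ)` satisfy `p₃ ≥ p₂²`. -/
theorem ppt_moment_inequality {a b : ℕ}
    (ρ : Matrix (Fin a × Fin b) (Fin a × Fin b) ℂ)
    (hρ : ρ.PosSemidef) (hτ : ρ.trace = 1)
    (hppt : (ptA ρ).PosSemidef) :
    (((ptA ρ) ^ 2).trace.re) ^ 2 ≤ ((ptA ρ) ^ 3).trace.re := by
  set M := ptA ρ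
  have hH := hppt.1
  set lam := hH.eigenvalues with hlam
  have hnn : ∀ i, 0 ≤ lam i := fun i => hppt.eigenvalues_nonneg i
  have h1 : ∑ i, lam i = 1 := by
    have h := trace_pow_eq_sum hH 1
    simp only [pow_one] at h
    have ht : M.trace = 1 := by rw [trace_ptA, hτ]
    rw [ht] at h
    have := congrArg Complex.re h.symm
    simpa using this
  have h2 : (M ^ 2).trace.re = ∑ i, lam i ^ 2 := by
    have := congrArg Complex.re (trace_pow_eq_sum hH 2)
    simpa [← Complex.ofReal_pow] using this
  have h3 : (M ^ 3).trace.re = ∑ i, lam i ^ 3 := by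
    have := congrArg Complex.re (trace_pow_eq_sum hH 3)
    simpa [← Complex.ofReal_pow] using this
  rw [h2, h3]
  have key := Finset.sum_sq_le_sum_mul_sum_of_sq_eq_mul (R := ℝ) Finset.univ
    (r := fun i => lam i ^ 2) (f := fun i => lam i ^ 3) (g := fun i => lam i)
    (fun i _ => pow_nonneg (hnn i) 3) (fun i _ => hnn i) (fun i _ => by ring)
  calc (∑ i, lam i ^ 2) ^ 2 ≤ (∑ i, lam i ^ 3) * ∑ i, lam i := key
    _ = ∑ i, lam i ^ 3 := by rw [h1, mul_one]
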